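/- Let n ≥ 1, let f : ℝⁿ → ℝ be bounded and measurable, and let x ∈ ℝⁿ. Then the map ρ ↦ T_ρ f(x) is differentiable on (-1,1) and, for every ρ ∈ (-1,1), (d/dρ) T_ρ f(x) = (1/√(1-ρ²)) [ ⟨x, ∫_{ℝⁿ} y f(xρ + y√(1-ρ²)) dγ_n(y)⟩ + (ρ/√(1-ρ²)) ∫_{ℝⁿ} (Σ_{i=1}^n (1 - y_i²)) f(xρ + y√(1-ρ²)) dγ_n(y) ]. -/

import Mathlib

open MeasureTheory

/-- The standard Gaussian probability measure `γₙ` on `ℝⁿ`. -/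
noncomputable def gauss (n : ℕ) : Measure (EuclideanSpace ℝ (Fin n)) :=
  volume.withDensity
    (fun y => ENNReal.ofReal ((2 * Real.pi) ^ (-(n : ℝ) / 2) * Real.exp (-‖y‖ ^ 2 / 2)))

/-- The Ornstein-Uhlenbeck (noise) operator `T_ρ`. -/
noncomputable def OU (n : ℕ) (ρ : ℝ) (f : EuclideanSpace ℝ (Fin n) → ℝ)
    (x : EuclideanSpace ℝ (Fin n)) : ℝ :=
  ∫ y, f (ρ • x + Real.sqrt (1 - ρ ^ 2) • y) ∂(gauss n)

/-!
For `|r| < 1` the substitution `z = r • x + √(1 - r²) • y` turns `T_r f(x)` into `∫ f z * k_r z dz`,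
where `k_r` is the density of `𝒩(r • x, (1 - r²) I)`, so `r` only enters through a smooth kernel.
Its derivative `∂ᵣ k_r = k_r * ∂ᵣ log k_r` is, for `r` near `ρ`, bounded by a quadratic polynomial
in `‖z‖` times `exp (-‖z‖² / 4)`, which allows differentiating under the integral against the
bounded `f`. Substituting back, `∂ᵣ log k_r` at `ρ • x + √(1 - ρ²) • y` equals
`(⟪x, y⟫ + ρ / √(1 - ρ²) * ∑ i, (1 - y i ^ 2)) / √(1 - ρ²)`.
-/

open Real Topology

section Gaussian

variable {V : Type*} [NormedAddCommGroup V] [InnerProductSpace ℝ V] [FiniteDimensional ℝ V]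
  [MeasurableSpace V] [BorelSpace V]

lemma integrable_exp_neg_mul_sq_norm {b : ℝ} (hb : 0 < b) :
    Integrable (fun v : V => exp (-b * ‖v‖ ^ 2)) := by
  refine (GaussianFourier.integrable_cexp_neg_mul_sq_norm_add (V := V) (b := (b : ℂ))
    (by simpa using hb) 0 0).norm.congr (ae_of_all _ fun v => ?_)
  simp [Complex.norm_exp, ← Complex.ofReal_pow]

lemma sq_add_mul_exp_neg_sq_le (c t : ℝ) :
    (c + t) ^ 2 * exp (-t ^ 2 / 4) ≤ (2 * c ^ 2 + 16) * exp (-(1 / 8) * t ^ 2) := by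
  set E := exp (-(1 / 8) * t ^ 2)
  have hE_pos : 0 < E := exp_pos _
  have hE_sq : exp (-t ^ 2 / 4) = E * E := by rw [← exp_add]; ring_nf
  have hE_le : E ≤ 1 := exp_le_one_iff.2 (by nlinarith [sq_nonneg t])
  have hsq_E_le : t ^ 2 * E ≤ 8 := by
    have hinv : exp (t ^ 2 / 8) * E = 1 := by rw [← exp_add]; ring_nf; exact exp_zero
    nlinarith [add_one_le_exp (t ^ 2 / 8)]
  rw [hE_sq]
  nlinarith [sq_nonneg (c - t), mul_le_mul_of_nonneg_left hE_le (sq_nonneg c),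
    mul_pos hE_pos hE_pos, mul_le_mul_of_nonneg_right hsq_E_le hE_pos.le]

lemma integrable_sq_add_norm_mul_exp (c : ℝ) :
    Integrable (fun v : V => (c + ‖v‖) ^ 2 * exp (-‖v‖ ^ 2 / 4)) := by
  refine ((integrable_exp_neg_mul_sq_norm (V := V) (b := 1 / 8) (by norm_num)).const_mul
    (2 * c ^ 2 + 16)).mono' (by fun_prop) (ae_of_all _ fun v => ?_)
  rw [norm_of_nonneg (by positivity)]
  exact sq_add_mul_exp_neg_sq_le c ‖v‖

variable {F : Type*} [NormedAddCommGroup F] [NormedSpace ℝ F]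

lemma integral_comp_add_smul (c : V) {s : ℝ} (hs : 0 < s) (H : V → F) :
    ∫ y, H (c + s • y) = (s ^ Module.finrank ℝ V)⁻¹ • ∫ z, H z := by
  rw [Measure.integral_comp_smul volume (fun z => H (c + z)) s, integral_add_left_eq_self,
    abs_of_pos (by positivity)]

end Gaussian

namespace OU

variable {n : ℕ}

noncomputable def gaussDensity (n : ℕ) (y : EuclideanSpace ℝ (Fin n)) : ℝ :=
  (2 * π) ^ (-(n : ℝ) / 2) * exp (-‖y‖ ^ 2 / 2)

lemma gaussDensity_nonneg (y : EuclideanSpace ℝ (Fin n)) : 0 ≤ gaussDensity n y := by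
  unfold gaussDensity; positivity

@[fun_prop]
lemma continuous_gaussDensity : Continuous (gaussDensity n) := by
  unfold gaussDensity; fun_prop

lemma gauss_eq_withDensity :
    gauss n = volume.withDensity fun y => ENNReal.ofReal (gaussDensity n y) := rfl

variable {F : Type*} [NormedAddCommGroup F] [NormedSpace ℝ F]

lemma integral_gauss (g : EuclideanSpace ℝ (Fin n) → F) :
    ∫ y, g y ∂gauss n = ∫ y, gaussDensity n y • g y := by
  rw [gauss_eq_withDensity, integral_withDensity_eq_integral_toReal_smul
    (by fun_prop) (ae_of_all _ fun _ => ENNReal.ofReal_lt_top)]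
  simp_rw [ENNReal.toReal_ofReal (gaussDensity_nonneg _)]

lemma integrable_gauss_of_norm_le {g : EuclideanSpace ℝ (Fin n) → F}
    (hg : AEStronglyMeasurable g) (c : ℝ) (hbound : ∀ y, ‖g y‖ ≤ (c + ‖y‖) ^ 2) :
    Integrable g (gauss n) := by
  rw [gauss_eq_withDensity, integrable_withDensity_iff_integrable_smul' (by fun_prop)
    (ae_of_all _ fun _ => ENNReal.ofReal_lt_top)]
  simp_rw [ENNReal.toReal_ofReal (gaussDensity_nonneg _)]
  refine ((integrable_sq_add_norm_mul_exp c).const_mul ((2 * π) ^ (-(n : ℝ) / 2))).mono'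
    (continuous_gaussDensity.aestronglyMeasurable.smul hg) (ae_of_all _ fun y => ?_)
  have hexp : exp (-‖y‖ ^ 2 / 2) ≤ exp (-‖y‖ ^ 2 / 4) :=
    exp_le_exp.2 (by nlinarith [sq_nonneg ‖y‖])
  rw [norm_smul, norm_of_nonneg (gaussDensity_nonneg y), gaussDensity]
  calc (2 * π) ^ (-(n : ℝ) / 2) * exp (-‖y‖ ^ 2 / 2) * ‖g y‖
      ≤ (2 * π) ^ (-(n : ℝ) / 2) * exp (-‖y‖ ^ 2 / 4) * (c + ‖y‖) ^ 2 := by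
        gcongr; exact hbound y
    _ = _ := by ring

variable (x : EuclideanSpace ℝ (Fin n))

noncomputable def kernelExponent (r : ℝ) (z : EuclideanSpace ℝ (Fin n)) : ℝ :=
  -(n / 2) * log (1 - r ^ 2) - ‖z - r • x‖ ^ 2 / (2 * (1 - r ^ 2))

/-- For `|r| < 1`, the density of `r • x + √(1 - r²) • Y` with `Y ∼ γₙ`. -/
noncomputable def kernel (r : ℝ) (z : EuclideanSpace ℝ (Fin n)) : ℝ :=
  (2 * π) ^ (-(n : ℝ) / 2) * exp (kernelExponent x r z)

noncomputable def score (r : ℝ) (z : EuclideanSpace ℝ (Fin n)) : ℝ :=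
  n * r / (1 - r ^ 2) + inner ℝ x (z - r • x) / (1 - r ^ 2)
    - r * ‖z - r • x‖ ^ 2 / (1 - r ^ 2) ^ 2

variable {x}

lemma kernel_pos (r : ℝ) (z : EuclideanSpace ℝ (Fin n)) : 0 < kernel x r z := by
  unfold kernel; positivity

@[fun_prop]
lemma continuous_kernel (r : ℝ) : Continuous (kernel x r) := by
  unfold kernel kernelExponent; fun_prop

@[fun_prop]
lemma continuous_score (r : ℝ) : Continuous (score x r) := by
  unfold score; fun_prop

lemma hasDerivAt_kernelExponent {r : ℝ} (hr : r ^ 2 < 1) (z : EuclideanSpace ℝ (Fin n)) :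
    HasDerivAt (fun t => kernelExponent x t z) (score x r z) r := by
  have hu : 0 < 1 - r ^ 2 := by linarith
  have hsq : HasDerivAt (fun t : ℝ => 1 - t ^ 2) (-(2 * r)) r := by
    simpa using (hasDerivAt_pow 2 r).const_sub 1
  have hnorm : HasDerivAt (fun t : ℝ => ‖z - t • x‖ ^ 2) (2 * inner ℝ (z - r • x) (-x)) r := by
    simpa using ((hasDerivAt_id r).smul_const x).const_sub z |>.norm_sq
  refine (((hsq.log hu.ne').const_mul (-(n / 2 : ℝ))).sub
    (hnorm.div (hsq.const_mul 2) (by positivity))).congr_deriv ?_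
  rw [score, inner_neg_right, real_inner_comm]
  field_simp
  ring

lemma hasDerivAt_kernel {r : ℝ} (hr : r ^ 2 < 1) (z : EuclideanSpace ℝ (Fin n)) :
    HasDerivAt (fun t => kernel x t z) (kernel x r z * score x r z) r := by
  simpa only [kernel, mul_assoc] using
    (hasDerivAt_kernelExponent hr z).exp.const_mul ((2 * π) ^ (-(n : ℝ) / 2))

lemma norm_sub_smul_le {r : ℝ} (hr : r ^ 2 ≤ 1) (z : EuclideanSpace ℝ (Fin n)) :
    ‖z - r • x‖ ≤ ‖z‖ + ‖x‖ := by
  have : |r| ≤ 1 := by rwa [← sq_le_one_iff_abs_le_one]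
  calc ‖z - r • x‖ ≤ ‖z‖ + |r| * ‖x‖ := by simpa [norm_smul] using norm_sub_le z (r • x)
    _ ≤ ‖z‖ + ‖x‖ := by nlinarith [norm_nonneg x]

lemma kernel_le {δ r : ℝ} (hδ : 0 < δ) (hr : δ ≤ 1 - r ^ 2) (z : EuclideanSpace ℝ (Fin n)) :
    kernel x r z ≤ (2 * π) ^ (-(n : ℝ) / 2) * exp (-(n / 2) * log δ + ‖x‖ ^ 2 / 2)
      * exp (-‖z‖ ^ 2 / 4) := by
  have hu : 0 < 1 - r ^ 2 := hδ.trans_le hr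
  have hz : ‖z‖ ≤ ‖z - r • x‖ + ‖x‖ := by
    simpa using norm_sub_smul_le (x := -x) (r := r) (by nlinarith) (z - r • x)
  have hquad : ‖z‖ ^ 2 / 4 - ‖x‖ ^ 2 / 2 ≤ ‖z - r • x‖ ^ 2 / (2 * (1 - r ^ 2)) := by
    have hdiv : ‖z - r • x‖ ^ 2 / 2 ≤ ‖z - r • x‖ ^ 2 / (2 * (1 - r ^ 2)) :=
      div_le_div_of_nonneg_left (sq_nonneg _) (by positivity) (by nlinarith)
    nlinarith [sq_nonneg (‖z - r • x‖ - ‖x‖), norm_nonneg z]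
  have hlog : -(n / 2 : ℝ) * log (1 - r ^ 2) ≤ -(n / 2) * log δ := by
    nlinarith [log_le_log hδ hr, n.cast_nonneg (α := ℝ)]
  rw [kernel, mul_assoc, ← exp_add]
  gcongr
  rw [kernelExponent]
  linarith

lemma abs_score_le {δ r : ℝ} (hδ : 0 < δ) (hr : δ ≤ 1 - r ^ 2) (z : EuclideanSpace ℝ (Fin n)) :
    |score x r z| ≤ (n + 1 + 2 * ‖x‖ + ‖z‖) ^ 2 / δ ^ 2 := by
  have hu : 0 < 1 - r ^ 2 := hδ.trans_le hr
  have hu1 : 1 - r ^ 2 ≤ 1 := by nlinarith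
  have hr1 : |r| ≤ 1 := by rw [← sq_le_one_iff_abs_le_one]; linarith
  have hq0 : 0 ≤ ‖z - r • x‖ := norm_nonneg _
  have hq : ‖z - r • x‖ ≤ ‖z‖ + ‖x‖ := norm_sub_smul_le (by linarith) z
  have hinner : |inner ℝ x (z - r • x)| ≤ ‖x‖ * ‖z - r • x‖ := abs_real_inner_le_norm _ _
  have hscore : score x r z = (n * r * (1 - r ^ 2) + inner ℝ x (z - r • x) * (1 - r ^ 2)
      - r * ‖z - r • x‖ ^ 2) / (1 - r ^ 2) ^ 2 := by
    rw [score]; field_simp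
  rw [hscore, abs_div, abs_of_pos (pow_pos hu 2)]
  generalize 1 - r ^ 2 = u at *
  generalize ‖z - r • x‖ = q at *
  generalize inner ℝ x (z - r • x) = i at *
  have hnum : |n * r * u + i * u - r * q ^ 2| ≤ n + ‖x‖ * q + q ^ 2 := by
    have hru : |r| * u ≤ 1 := by nlinarith [abs_nonneg r]
    calc _ ≤ |n * r * u| + |i * u| + |r * q ^ 2| :=
          (abs_sub _ _).trans (add_le_add_left (abs_add_le _ _) _)
      _ = n * (|r| * u) + |i| * u + |r| * q ^ 2 := by
          simp only [abs_mul, Nat.abs_cast, abs_of_pos hu, abs_pow, sq_abs]; ring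
      _ ≤ n * 1 + ‖x‖ * q * 1 + 1 * q ^ 2 := by
          gcongr
      _ = _ := by ring
  calc _ ≤ (n + ‖x‖ * q + q ^ 2) / u ^ 2 := div_le_div_of_nonneg_right hnum (by positivity)
    _ ≤ (n + 1 + 2 * ‖x‖ + ‖z‖) ^ 2 / δ ^ 2 := by
      refine div_le_div₀ (by positivity) ?_ (by positivity) (by gcongr)
      nlinarith [norm_nonneg x, norm_nonneg z, mul_le_mul_of_nonneg_left hq (norm_nonneg x),
        pow_le_pow_left₀ hq0 hq 2, n.cast_nonneg (α := ℝ)]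

lemma kernel_add_smul {r : ℝ} (hr : r ^ 2 < 1) (y : EuclideanSpace ℝ (Fin n)) :
    kernel x r (r • x + √(1 - r ^ 2) • y) = (√(1 - r ^ 2) ^ n)⁻¹ * gaussDensity n y := by
  have hu : 0 < 1 - r ^ 2 := by linarith
  set s := √(1 - r ^ 2)
  have hs : 0 < s := sqrt_pos.2 hu
  have hs_sq : s ^ 2 = 1 - r ^ 2 := sq_sqrt hu.le
  have hexp : kernelExponent x r (r • x + s • y) = -(n * log s) + -‖y‖ ^ 2 / 2 := by
    rw [kernelExponent, add_sub_cancel_left, norm_smul, norm_of_nonneg hs.le, ← hs_sq, log_pow]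
    field_simp
    push_cast
    ring
  rw [kernel, gaussDensity, hexp, exp_add, exp_neg, exp_nat_mul, exp_log hs]
  ring

lemma sum_one_sub_sq (y : EuclideanSpace ℝ (Fin n)) : ∑ i, (1 - y i ^ 2) = n - ‖y‖ ^ 2 := by
  simp [Finset.sum_sub_distrib, EuclideanSpace.real_norm_sq_eq]

lemma score_add_smul {r : ℝ} (hr : r ^ 2 < 1) (y : EuclideanSpace ℝ (Fin n)) :
    score x r (r • x + √(1 - r ^ 2) • y) =
      1 / √(1 - r ^ 2) * (inner ℝ x y + r / √(1 - r ^ 2) * ∑ i, (1 - y i ^ 2)) := by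
  have hu : 0 < 1 - r ^ 2 := by linarith
  set s := √(1 - r ^ 2)
  have hs : 0 < s := sqrt_pos.2 hu
  have hs_sq : s ^ 2 = 1 - r ^ 2 := sq_sqrt hu.le
  rw [score, add_sub_cancel_left, norm_smul, norm_of_nonneg hs.le, inner_smul_right,
    sum_one_sub_sq, ← hs_sq]
  field_simp
  ring

lemma integral_mul_kernel {r : ℝ} (hr : r ^ 2 < 1) (g : EuclideanSpace ℝ (Fin n) → ℝ) :
    ∫ z, g z * kernel x r z = ∫ y, g (r • x + √(1 - r ^ 2) • y) ∂gauss n := by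
  have hs : 0 < √(1 - r ^ 2) := sqrt_pos.2 (by linarith)
  calc ∫ z, g z * kernel x r z
      = √(1 - r ^ 2) ^ n * ∫ y, g (r • x + √(1 - r ^ 2) • y)
          * kernel x r (r • x + √(1 - r ^ 2) • y) := by
        rw [integral_comp_add_smul (r • x) hs (fun z => g z * kernel x r z),
          finrank_euclideanSpace_fin, smul_eq_mul, mul_inv_cancel_left₀ (by positivity)]
    _ = ∫ y, gaussDensity n y • g (r • x + √(1 - r ^ 2) • y) := by
        rw [← integral_const_mul]
        congr with y
        rw [kernel_add_smul hr, smul_eq_mul]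
        field_simp
    _ = _ := (integral_gauss _).symm

lemma hasDerivAt_integral_mul_kernel {f : EuclideanSpace ℝ (Fin n) → ℝ} (hf : Measurable f)
    {M : ℝ} (hM : ∀ z, |f z| ≤ M) {ρ : ℝ} (hρ : ρ ^ 2 < 1) :
    HasDerivAt (fun r => ∫ z, f z * kernel x r z)
      (∫ z, f z * (kernel x ρ z * score x ρ z)) ρ := by
  obtain ⟨δ, hδ, hδρ⟩ := exists_between (show 0 < 1 - ρ ^ 2 by linarith)
  have hnhds : {r : ℝ | δ < 1 - r ^ 2} ∈ 𝓝 ρ :=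
    (isOpen_lt continuous_const (by fun_prop)).mem_nhds hδρ
  set C := (2 * π) ^ (-(n : ℝ) / 2) * exp (-(n / 2) * log δ + ‖x‖ ^ 2 / 2)
  have hM0 : 0 ≤ M := (abs_nonneg _).trans (hM 0)
  have hint : Integrable (fun z => f z * kernel x ρ z) := by
    refine ((integrable_exp_neg_mul_sq_norm (b := 1 / 4) (by norm_num)).const_mul (M * C)).mono'
      (by fun_prop) (ae_of_all _ fun z => ?_)
    rw [norm_mul, norm_of_nonneg (kernel_pos ρ z).le, mul_assoc, norm_eq_abs,
      show -(1 / 4) * ‖z‖ ^ 2 = -‖z‖ ^ 2 / 4 by ring]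
    exact mul_le_mul (hM z) (kernel_le hδ hδρ.le z) (kernel_pos ρ z).le hM0
  have hderiv_le : ∀ z, ∀ r ∈ {r : ℝ | δ < 1 - r ^ 2},
      ‖f z * (kernel x r z * score x r z)‖ ≤
        M * (C / δ ^ 2) * ((n + 1 + 2 * ‖x‖ + ‖z‖) ^ 2 * exp (-‖z‖ ^ 2 / 4)) := by
    intro z r hr
    rw [norm_mul, norm_mul, norm_of_nonneg (kernel_pos r z).le, norm_eq_abs, norm_eq_abs]
    calc |f z| * (kernel x r z * |score x r z|)
        ≤ M * (C * exp (-‖z‖ ^ 2 / 4) * ((n + 1 + 2 * ‖x‖ + ‖z‖) ^ 2 / δ ^ 2)) :=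
          mul_le_mul (hM z) (mul_le_mul (kernel_le hδ hr.le z) (abs_score_le hδ hr.le z)
            (abs_nonneg _) (by positivity)) (mul_nonneg (kernel_pos r z).le (abs_nonneg _)) hM0
      _ = _ := by ring
  refine (hasDerivAt_integral_of_dominated_loc_of_deriv_le hnhds
    (Filter.Eventually.of_forall fun r => by fun_prop) hint (by fun_prop)
    (ae_of_all _ hderiv_le) ((integrable_sq_add_norm_mul_exp _).const_mul _)
    (ae_of_all _ fun z r hr => ?_)).2
  exact (hasDerivAt_kernel (by linarith [hr.out]) z).const_mul (f z)

lemma integral_mul_kernel_mul_score {f : EuclideanSpace ℝ (Fin n) → ℝ} (hf : Measurable f)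
    {M : ℝ} (hM : ∀ z, |f z| ≤ M) {ρ : ℝ} (hρ : ρ ^ 2 < 1) :
    ∫ z, f z * (kernel x ρ z * score x ρ z) =
      1 / √(1 - ρ ^ 2) * (inner ℝ x (∫ y, f (ρ • x + √(1 - ρ ^ 2) • y) • y ∂gauss n)
        + ρ / √(1 - ρ ^ 2)
          * ∫ y, (∑ i, (1 - y i ^ 2)) * f (ρ • x + √(1 - ρ ^ 2) • y) ∂gauss n) := by
  set s := √(1 - ρ ^ 2)
  have hg : Measurable fun y => f (ρ • x + s • y) :=
    hf.comp (by fun_prop : Continuous fun y : EuclideanSpace ℝ (Fin n) => ρ • x + s • y).measurable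
  have hg_le : ∀ y, ‖f (ρ • x + s • y)‖ ≤ M := fun y => hM _
  have hid : Integrable (fun y => y) (gauss n) :=
    integrable_gauss_of_norm_le aestronglyMeasurable_id 1 fun y => by nlinarith [norm_nonneg y]
  have hsum : Integrable (fun y : EuclideanSpace ℝ (Fin n) => ∑ i, (1 - y i ^ 2)) (gauss n) := by
    refine integrable_gauss_of_norm_le (Continuous.aestronglyMeasurable (by fun_prop)) (n + 1)
      fun y => ?_
    rw [sum_one_sub_sq, norm_eq_abs, abs_le]
    constructor <;> nlinarith [norm_nonneg y, n.cast_nonneg (α := ℝ)]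
  have hsmul : Integrable (fun y => f (ρ • x + s • y) • y) (gauss n) :=
    hid.bdd_smul (φ := fun y => f (ρ • x + s • y)) M hg.aestronglyMeasurable (ae_of_all _ hg_le)
  calc ∫ z, f z * (kernel x ρ z * score x ρ z)
      = ∫ z, (f z * score x ρ z) * kernel x ρ z := by congr with z; ring
    _ = ∫ y, f (ρ • x + s • y) * score x ρ (ρ • x + s • y) ∂gauss n := integral_mul_kernel hρ _
    _ = ∫ y, 1 / s * (inner ℝ x (f (ρ • x + s • y) • y)
          + ρ / s * ((∑ i, (1 - y i ^ 2)) * f (ρ • x + s • y))) ∂gauss n := by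
        congr with y
        rw [score_add_smul hρ, inner_smul_right]
        ring
    _ = _ := by
        rw [integral_const_mul, integral_add (hsmul.const_inner x)
          ((hsum.mul_bdd hg.aestronglyMeasurable (ae_of_all _ hg_le)).const_mul _),
          integral_const_mul, integral_inner hsmul]

end OU

theorem hasDerivAt_OU_general (n : ℕ) (f : EuclideanSpace ℝ (Fin n) → ℝ)
    (hmeas : Measurable f) (hbdd : ∃ M : ℝ, ∀ y, |f y| ≤ M)
    (x : EuclideanSpace ℝ (Fin n)) (ρ : ℝ) (hρ : ρ ∈ Set.Ioo (-1 : ℝ) 1) :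
    HasDerivAt (fun r => OU n r f x)
      ((1 / Real.sqrt (1 - ρ ^ 2)) *
        ((inner ℝ x (∫ y, f (ρ • x + Real.sqrt (1 - ρ ^ 2) • y) • y ∂(gauss n)) : ℝ)
          + (ρ / Real.sqrt (1 - ρ ^ 2)) *
            ∫ y, (∑ i, (1 - (y i) ^ 2)) * f (ρ • x + Real.sqrt (1 - ρ ^ 2) • y) ∂(gauss n))) ρ := by
  obtain ⟨M, hM⟩ := hbdd
  have hOU : (fun r => OU n r f x) =ᶠ[𝓝 ρ] fun r => ∫ z, f z * OU.kernel x r z := by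
    filter_upwards [Ioo_mem_nhds hρ.1 hρ.2] with r hr
    exact (OU.integral_mul_kernel (sq_lt_one_iff_abs_lt_one r |>.2 (abs_lt.2 hr)) f).symm
  have hρ_sq : ρ ^ 2 < 1 := sq_lt_one_iff_abs_lt_one ρ |>.2 (abs_lt.2 hρ)
  rw [← OU.integral_mul_kernel_mul_score hmeas hM hρ_sq]
  exact (OU.hasDerivAt_integral_mul_kernel hmeas hM hρ_sq).congr_of_eventuallyEq hOU

theorem hasDerivAt_OU (n : ℕ) (hn : 1 ≤ n) (f : EuclideanSpace ℝ (Fin n) → ℝ)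
    (hmeas : Measurable f) (hbdd : ∃ M : ℝ, ∀ y, |f y| ≤ M)
    (x : EuclideanSpace ℝ (Fin n)) (ρ : ℝ) (hρ : ρ ∈ Set.Ioo (-1 : ℝ) 1) :
    HasDerivAt (fun r => OU n r f x)
      ((1 / Real.sqrt (1 - ρ ^ 2)) *
        ((inner ℝ x (∫ y, f (ρ • x + Real.sqrt (1 - ρ ^ 2) • y) • y ∂(gauss n)) : ℝ)
          + (ρ / Real.sqrt (1 - ρ ^ 2)) *
            ∫ y, (∑ i, (1 - (y i) ^ 2)) * f (ρ • x + Real.sqrt (1 - ρ ^ 2) • y) ∂(gauss n))) ρ :=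
  hasDerivAt_OU_general n f hmeas hbdd x ρ hρ
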